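/- arXiv:math/0410046 — 4 statements merged into one kernel-verified Lean document; each statement's English description precedes it below -/
import Mathlib

section
/- Division theorem (commutative case of Théorème 3.1). Let P_1,…,P_r be nonzero elements of R_k and let ℕ^{n+q} = Δ_1 ∪ ⋯ ∪ Δ_r ∪ Δ̄ be the partition associated with exp_≺(P_1),…,exp_≺(P_r). Then for every P ∈ R_k there exists a unique tuple (Q_1,…,Q_r,R) of elements of R_k such that: P = Σ_{j=1}^r Q_j P_j + R; for every j, either Q_j = 0 or DN(Q_j) + exp_≺(P_j) ⊆ Δ_j; and either R = 0 or DN(R) ⊆ Δ̄. -/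
/-!
Uniqueness: if `∑ Dⱼ Pⱼ + S = 0` under the support conditions, the nonzero terms have the
privileged exponents `exp Dⱼ + eⱼ ∈ Δⱼ` and `exp S ∈ Δ̄`, which are pairwise distinct because the
`Δⱼ` and `Δ̄` are disjoint; the largest of them cannot cancel.

Existence: the remainder is the quotient by the divisor `1` (exponent `0`, cell `Δ̄`), and the
partition is encoded by the map `κ` sending an exponent to its cell. The support conditions allow
the coefficient of `Qᵢ` at `u` to be nonzero only if the slot `u + eᵢ` lies in cell `i`, so there is
one unknown `c v` per slot `v`. In the coefficient of `∑ Qᵢ Pᵢ` at `v`, the unknown `c v` appears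
multiplied by the leading coefficient of `P_{κ v}`, and every other contribution comes from a slot
`u + eᵢ ≻ v`. This triangular system is solved by well-founded recursion towards `≻`-larger slots.
The recursion stays among slots of bounded z-degree: if `C` bounds the z-degrees of the `Pᵢ`, the
weight `ψ(β) = |β| + C·L(β)` does not increase along the Newton diagram of `Pᵢ` below `eᵢ`, so only
slots whose `ψ` is at most its maximum over `F` need to carry nonzero coefficients.
-/

open Classical

noncomputable section

/-- Exponents in ℕ^{n+q}, written as pairs (α, β) ∈ ℕ^n × ℕ^q. -/
abbrev Expo (n q : ℕ) := (Fin n →₀ ℕ) × (Fin q →₀ ℕ)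

/-- The ring R_A = A[[x]][z], polynomials in z = (z_1,…,z_q) over A[[x]]. -/
abbrev Rxz (n q : ℕ) (A : Type) [CommRing A] :=
  MvPolynomial (Fin q) (MvPowerSeries (Fin n) A)

/-- Coefficient c_{α,β} of `P` at the pair exponent `d = (α, β)`. -/
def coeffOf {n q : ℕ} {A : Type} [CommRing A] (P : Rxz n q A) (d : Expo n q) : A :=
  MvPowerSeries.coeff d.1 (MvPolynomial.coeff d.2 P)

/-- Newton diagram DN(P). -/
def newtonDiag {n q : ℕ} {A : Type} [CommRing A] (P : Rxz n q A) : Set (Expo n q) :=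
  {d | coeffOf P d ≠ 0}

/-- The linear form L(β) = Σ l_i β_i. -/
def Lform {q : ℕ} (l : Fin q → ℕ) (β : Fin q →₀ ℕ) : ℕ := ∑ i, l i * β i

/-- Total degree |β| of a finitely supported exponent. -/
def degSum {σ : Type} [Fintype σ] (β : σ →₀ ℕ) : ℕ := ∑ i, β i

/-- The order ≺_L built from the linear form given by `l` and the tie-breaking
monomial order `lt0` (where `lt0 d' d` means `d >₀ d'`). -/
def PrecL {n q : ℕ} (l : Fin q → ℕ) (lt0 : Expo n q → Expo n q → Prop)
    (d d' : Expo n q) : Prop :=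
  Lform l d.2 < Lform l d'.2 ∨
    (Lform l d.2 = Lform l d'.2 ∧
      (degSum d.2 < degSum d'.2 ∨
        (degSum d.2 = degSum d'.2 ∧
          (degSum d'.1 < degSum d.1 ∨
            (degSum d.1 = degSum d'.1 ∧ lt0 d' d)))))

/-- `e` is the privileged exponent exp_≺(P): the `prec`-maximum of the Newton diagram of `P`. -/
def IsPrivExp {n q : ℕ} {A : Type} [CommRing A] (prec : Expo n q → Expo n q → Prop)
    (P : Rxz n q A) (e : Expo n q) : Prop :=
  coeffOf P e ≠ 0 ∧ ∀ d, coeffOf P d ≠ 0 → d = e ∨ prec d e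

/-- `v ∈ e + ℕ^{n+q}`. -/
def inShift {n q : ℕ} (e v : Expo n q) : Prop := ∃ γ : Expo n q, v = e + γ

/-- The region Δ_j of the partition of ℕ^{n+q} associated to the exponents e_1,…,e_r:
Δ_j = (e_j + ℕ^{n+q}) \ (Δ_1 ∪ ⋯ ∪ Δ_{j-1}). -/
def DeltaJ {n q r : ℕ} (e : Fin r → Expo n q) (j : Fin r) : Set (Expo n q) :=
  {v | inShift (e j) v ∧ ∀ k, k < j → ¬ inShift (e k) v}

/-- The residual region Δ̄ (complement of the union of the Δ_j). -/
def DeltaBar {n q r : ℕ} (e : Fin r → Expo n q) : Set (Expo n q) :=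
  {v | ∀ j, ¬ inShift (e j) v}

open Finset.HasAntidiagonal

instance Finset.HasAntidiagonal.instProd {A B : Type*} [AddMonoid A] [AddMonoid B]
    [HasAntidiagonal A] [HasAntidiagonal B] : HasAntidiagonal (A × B) where
  antidiagonal x :=
    (antidiagonal x.1 ×ˢ antidiagonal x.2).map (Equiv.prodProdProdComm A A B B).toEmbedding
  mem_antidiagonal {x p} := by
    obtain ⟨⟨a, b⟩, c, d⟩ := p
    simp [Prod.ext_iff, Equiv.prodProdProdComm]

theorem Finset.HasAntidiagonal.sum_antidiagonal_prod {A B M : Type*} [AddMonoid A] [AddMonoid B]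
    [AddCommMonoid M] [HasAntidiagonal A] [HasAntidiagonal B] (x : A × B)
    (f : (A × B) × (A × B) → M) :
    ∑ p ∈ antidiagonal x, f p =
      ∑ a ∈ antidiagonal x.1, ∑ b ∈ antidiagonal x.2, f ((a.1, b.1), (a.2, b.2)) := by
  rw [← Finset.sum_product']
  exact Finset.sum_map _ _ _

theorem Finset.exists_forall_eq_or_rel {α : Type*} {r : α → α → Prop} [IsStrictTotalOrder α r]
    (s : Finset α) (hs : s.Nonempty) : ∃ m ∈ s, ∀ x ∈ s, x = m ∨ r x m := by
  let := linearOrderOfSTO r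
  obtain ⟨m, hm, hmax⟩ := s.exists_max_image id hs
  exact ⟨m, hm, hmax⟩

theorem WellFounded.exists_fix_eq {α β : Type*} [Nonempty β] {r : α → α → Prop}
    (hr : WellFounded r) (G : (α → β) → α → β)
    (hG : ∀ f g a, (∀ b, r b a → f b = g b) → G f a = G g a) : ∃ f : α → β, ∀ a, f a = G f a := by
  let f := hr.fix fun a ih => G (fun b => if h : r b a then ih b h else Classical.arbitrary β) a
  refine ⟨f, fun a => ?_⟩
  rw [show f a = _ from hr.fix_eq _ a]
  exact hG _ _ a fun b hb => dif_pos hb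

section Coefficients

variable {n q : ℕ} {A : Type} [CommRing A]

@[simp] lemma coeffOf_zero (d : Expo n q) : coeffOf (0 : Rxz n q A) d = 0 := by simp [coeffOf]

@[simp] lemma coeffOf_sub (F G : Rxz n q A) (d : Expo n q) :
    coeffOf (F - G) d = coeffOf F d - coeffOf G d := by simp [coeffOf]

lemma coeffOf_sum {ι : Type*} (s : Finset ι) (f : ι → Rxz n q A) (d : Expo n q) :
    coeffOf (∑ i ∈ s, f i) d = ∑ i ∈ s, coeffOf (f i) d := by
  simp [coeffOf, MvPolynomial.coeff_sum]

lemma coeffOf_one (d : Expo n q) : coeffOf (1 : Rxz n q A) d = if d = 0 then 1 else 0 := by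
  obtain ⟨α, β⟩ := d
  by_cases hβ : β = 0 <;> by_cases hα : α = 0 <;>
    simp [coeffOf, MvPolynomial.coeff_one, MvPowerSeries.coeff_one, hα, hβ, Prod.ext_iff, eq_comm]

lemma coeffOf_mul (F G : Rxz n q A) (d : Expo n q) :
    coeffOf (F * G) d = ∑ p ∈ antidiagonal d, coeffOf F p.1 * coeffOf G p.2 := by
  rw [sum_antidiagonal_prod, Finset.sum_comm]
  simp [coeffOf, MvPolynomial.coeff_mul, MvPowerSeries.coeff_mul]

lemma ext_coeffOf {F G : Rxz n q A} (h : ∀ d, coeffOf F d = coeffOf G d) : F = G :=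
  MvPolynomial.ext _ _ fun β => MvPowerSeries.ext fun α => h (α, β)

lemma mem_support_of_coeffOf_ne_zero {F : Rxz n q A} {d : Expo n q} (h : coeffOf F d ≠ 0) :
    d.2 ∈ F.support :=
  MvPolynomial.mem_support_iff.2 fun h0 => h (by simp [coeffOf, h0])

lemma exists_coeffOf_eq (g : Expo n q → A) (hg : {β | ∃ α, g (α, β) ≠ 0}.Finite) :
    ∃ F : Rxz n q A, ∀ d, coeffOf F d = g d := by
  let F : (Fin q →₀ ℕ) →₀ MvPowerSeries (Fin n) A :=
    Finsupp.onFinset hg.toFinset (fun β α => g (α, β)) fun β hβ =>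
      hg.mem_toFinset.2 (Function.ne_iff.1 hβ)
  exact ⟨AddMonoidAlgebra.ofCoeff F, fun d => rfl⟩

lemma newtonDiag_sub_subset (F G : Rxz n q A) :
    newtonDiag (F - G) ⊆ newtonDiag F ∪ newtonDiag G := by
  intro d hd
  by_contra h
  simp only [Set.mem_union, newtonDiag, Set.mem_ofPred_eq, not_or, not_not] at h
  exact hd (by rw [coeffOf_sub, h.1, h.2, sub_self])

end Coefficients

lemma isPrivExp_one {n q : ℕ} {A : Type} [CommRing A] [Nontrivial A]
    (prec : Expo n q → Expo n q → Prop) : IsPrivExp prec (1 : Rxz n q A) 0 := by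
  refine ⟨by simp [coeffOf_one], fun d hd => Or.inl ?_⟩
  by_contra h
  simp [coeffOf_one, h] at hd

section PrivExp

variable {n q : ℕ} {A : Type} [CommRing A] {prec : Expo n q → Expo n q → Prop}
  [IsStrictTotalOrder (Expo n q) prec]

lemma IsPrivExp.coeffOf_eq_zero {F : Rxz n q A} {e v : Expo n q} (hF : IsPrivExp prec F e)
    (hev : prec e v) : coeffOf F v = 0 := by
  by_contra h
  rcases hF.2 v h with rfl | hve
  · exact irrefl_of prec v hev
  · exact asymm_of prec hve hev

lemma prec_add_of_prec_of_eq_or_prec (hadd : ∀ a b c : Expo n q, prec a b → prec (a + c) (b + c))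
    {a a' b b' : Expo n q} (ha : prec a a') (hb : b = b' ∨ prec b b') :
    prec (a + b) (a' + b') := by
  rcases hb with rfl | hb
  · exact hadd _ _ _ ha
  · refine trans_of prec (hadd _ _ _ ha) ?_
    simpa only [add_comm a'] using hadd _ _ a' hb

lemma IsPrivExp.mul [NoZeroDivisors A] (hadd : ∀ a b c : Expo n q, prec a b → prec (a + c) (b + c))
    {F G : Rxz n q A} {a b : Expo n q} (hF : IsPrivExp prec F a) (hG : IsPrivExp prec G b) :
    IsPrivExp prec (F * G) (a + b) := by
  have below : ∀ p : Expo n q × Expo n q, coeffOf F p.1 * coeffOf G p.2 ≠ 0 →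
      p = (a, b) ∨ prec (p.1 + p.2) (a + b) := by
    rintro ⟨u, w⟩ h
    rcases hF.2 u (left_ne_zero_of_mul h) with rfl | hu
    · rcases hG.2 w (right_ne_zero_of_mul h) with rfl | hw
      · exact Or.inl rfl
      · right; simpa only [add_comm u] using hadd _ _ u hw
    · exact Or.inr (prec_add_of_prec_of_eq_or_prec hadd hu (hG.2 w (right_ne_zero_of_mul h)))
  refine ⟨?_, fun v hv => ?_⟩
  · rw [coeffOf_mul, Finset.sum_eq_single_of_mem (a, b) (mem_antidiagonal.2 rfl)]
    · exact mul_ne_zero hF.1 hG.1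
    · intro p hp hpab
      by_contra h
      rcases below p h with h' | h'
      · exact hpab h'
      · exact irrefl_of prec (a + b) (by rwa [mem_antidiagonal.1 hp] at h')
  · rw [coeffOf_mul] at hv
    obtain ⟨p, hp, h⟩ := Finset.exists_ne_zero_of_sum_ne_zero hv
    rw [← mem_antidiagonal.1 hp]
    rcases below p h with rfl | h'
    · exact Or.inl rfl
    · exact Or.inr h'

lemma sum_ne_zero_of_injOn_isPrivExp {ι : Type*} {s : Finset ι} (hs : s.Nonempty)
    {f : ι → Rxz n q A} {ε : ι → Expo n q} (hε : ∀ i ∈ s, IsPrivExp prec (f i) (ε i))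
    (hinj : Set.InjOn ε s) : ∑ i ∈ s, f i ≠ 0 := by
  obtain ⟨m, hm, hmax⟩ := (s.image ε).exists_forall_eq_or_rel (r := prec) (hs.image ε)
  obtain ⟨i₀, hi₀, rfl⟩ := Finset.mem_image.1 hm
  intro hsum
  apply (hε i₀ hi₀).1
  have := congrArg (coeffOf · (ε i₀)) hsum
  simp only [coeffOf_sum, coeffOf_zero] at this
  rwa [Finset.sum_eq_single_of_mem i₀ hi₀] at this
  intro i hi hne
  rcases hmax (ε i) (Finset.mem_image_of_mem ε hi) with h | h
  · exact absurd (hinj hi hi₀ h) hne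
  · exact (hε i hi).coeffOf_eq_zero h

lemma eq_zero_of_sum_mul_eq_zero [NoZeroDivisors A]
    (hadd : ∀ a b c : Expo n q, prec a b → prec (a + c) (b + c))
    (hexp : ∀ F : Rxz n q A, F ≠ 0 → ∃ e, IsPrivExp prec F e) {ι : Type*} [Fintype ι]
    {P : ι → Rxz n q A} {ε : ι → Expo n q} (hε : ∀ i, IsPrivExp prec (P i) (ε i))
    {κ : Expo n q → ι} {D : ι → Rxz n q A} (hD : ∀ i, ∀ d ∈ newtonDiag (D i), κ (d + ε i) = i)
    (hsum : ∑ i, D i * P i = 0) : D = 0 := by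
  have : ∀ i, ∃ a, D i ≠ 0 → IsPrivExp prec (D i) a := fun i => by
    by_cases h : D i = 0
    · exact ⟨0, absurd h⟩
    · obtain ⟨a, ha⟩ := hexp _ h
      exact ⟨a, fun _ => ha⟩
  choose a ha using this
  by_contra hne
  obtain ⟨i₀, hi₀⟩ := Function.ne_iff.1 hne
  have hs : ∀ i ∈ Finset.univ.filter (D · ≠ 0), D i ≠ 0 := fun i hi => (Finset.mem_filter.1 hi).2
  refine sum_ne_zero_of_injOn_isPrivExp (s := Finset.univ.filter (D · ≠ 0)) ⟨i₀, by simpa using hi₀⟩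
    (fun i hi => (ha i (hs i hi)).mul hadd (hε i)) (fun i hi j hj hij => ?_) ?_
  · rw [← hD i _ (ha i (hs i hi)).1, ← hD j _ (ha j (hs j hj)).1]
    exact congrArg κ hij
  · rw [Finset.sum_filter_of_ne fun i _ h => left_ne_zero_of_mul h]
    exact hsum

lemma eq_of_sum_mul_eq_sum_mul [NoZeroDivisors A]
    (hadd : ∀ a b c : Expo n q, prec a b → prec (a + c) (b + c))
    (hexp : ∀ F : Rxz n q A, F ≠ 0 → ∃ e, IsPrivExp prec F e) {ι : Type*} [Fintype ι]
    {P : ι → Rxz n q A} {ε : ι → Expo n q} (hε : ∀ i, IsPrivExp prec (P i) (ε i))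
    {κ : Expo n q → ι} {Q Q' : ι → Rxz n q A}
    (hQ : ∀ i, ∀ d ∈ newtonDiag (Q i), κ (d + ε i) = i)
    (hQ' : ∀ i, ∀ d ∈ newtonDiag (Q' i), κ (d + ε i) = i)
    (h : ∑ i, Q i * P i = ∑ i, Q' i * P i) : Q = Q' := by
  refine sub_eq_zero.1 (eq_zero_of_sum_mul_eq_zero hadd hexp hε (κ := κ) (fun i d hd => ?_) ?_)
  · rcases newtonDiag_sub_subset _ _ hd with hd | hd
    exacts [hQ i d hd, hQ' i d hd]
  · simp only [Pi.sub_apply, sub_mul, Finset.sum_sub_distrib, h, sub_self]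

end PrivExp


section PrecL

variable {n q : ℕ} {l : Fin q → ℕ} {lt0 : Expo n q → Expo n q → Prop}

lemma Lform_add (l : Fin q → ℕ) (β γ : Fin q →₀ ℕ) :
    Lform l (β + γ) = Lform l β + Lform l γ := by
  simp [Lform, mul_add, Finset.sum_add_distrib]

lemma degSum_eq_degree {σ : Type} [Fintype σ] (β : σ →₀ ℕ) : degSum β = β.degree :=
  (Finsupp.degree_eq_sum β).symm

lemma degSum_add {σ : Type} [Fintype σ] (β γ : σ →₀ ℕ) :
    degSum (β + γ) = degSum β + degSum γ := by
  simp [degSum_eq_degree]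

lemma le_degSum {σ : Type} [Fintype σ] (β : σ →₀ ℕ) (i : σ) : β i ≤ degSum β :=
  Finset.single_le_sum (fun _ _ => Nat.zero_le _) (Finset.mem_univ i)

lemma isStrictTotalOrder_precL (htri : ∀ a b : Expo n q, lt0 a b ∨ a = b ∨ lt0 b a)
    (htrans : ∀ a b c : Expo n q, lt0 a b → lt0 b c → lt0 a c) (hwf : WellFounded lt0) :
    IsStrictTotalOrder (Expo n q) (PrecL l lt0) where
  irrefl a h := by
    have := hwf.irrefl.irrefl a
    unfold PrecL at h
    grind
  trans a b c hab hbc := by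
    unfold PrecL at *
    have := htrans c b a
    grind
  trichotomous a b hab hba := by
    unfold PrecL at *
    have := htri a b
    grind

lemma precL_add_right (hadd : ∀ a b c : Expo n q, lt0 a b → lt0 (a + c) (b + c))
    {a b : Expo n q} (c : Expo n q) (h : PrecL l lt0 a b) : PrecL l lt0 (a + c) (b + c) := by
  have := hadd b a c
  simp only [PrecL, Prod.fst_add, Prod.snd_add, Lform_add, degSum_add] at *
  grind

lemma Lform_le_of_degSum_le {β : Fin q →₀ ℕ} {B : ℕ} (h : degSum β ≤ B) :
    Lform l β ≤ ∑ i, l i * B :=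
  Finset.sum_le_sum fun i _ => Nat.mul_le_mul_left _ ((le_degSum β i).trans h)

lemma wellFounded_precL_swap_of_degSum_le (hwf : WellFounded lt0) (B : ℕ) :
    WellFounded fun w v : Expo n q => PrecL l lt0 v w ∧ degSum w.2 ≤ B := by
  let key : Expo n q → ℕ × ℕ × ℕ × Expo n q := fun v =>
    (∑ i, l i * B - Lform l v.2, B - degSum v.2, degSum v.1, v)
  refine Subrelation.wf (fun {w v} ⟨hvw, hw⟩ => ?_)
    (InvImage.wf key (wellFounded_lt.prod_lex (wellFounded_lt.prod_lex
      (wellFounded_lt.prod_lex hwf))))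
  have := Lform_le_of_degSum_le (l := l) hw
  simp only [InvImage, key, Prod.lex_def, PrecL] at hvw ⊢
  grind


lemma exists_isPrivExp_precL {A : Type} [CommRing A]
    (htri : ∀ a b : Expo n q, lt0 a b ∨ a = b ∨ lt0 b a)
    (htrans : ∀ a b c : Expo n q, lt0 a b → lt0 b c → lt0 a c) (hwf : WellFounded lt0)
    {F : Rxz n q A} (hF : F ≠ 0) : ∃ e, IsPrivExp (PrecL l lt0) F e := by
  have := isStrictTotalOrder_precL (l := l) htri htrans hwf
  obtain ⟨β, hβ⟩ := MvPolynomial.support_nonempty.2 hF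
  obtain ⟨α, hα⟩ : ∃ α, coeffOf F (α, β) ≠ 0 := by
    by_contra! h
    exact MvPolynomial.mem_support_iff.1 hβ (MvPowerSeries.ext h)
  obtain ⟨e, he, hmax⟩ := (wellFounded_precL_swap_of_degSum_le hwf (F.support.sup degSum)).has_min
    (newtonDiag F) ⟨(α, β), hα⟩
  refine ⟨e, he, fun d hd => ?_⟩
  rcases trichotomous_of (PrecL l lt0) d e with h | h | h
  · exact Or.inr h
  · exact Or.inl h
  · exact absurd ⟨h, Finset.le_sup (mem_support_of_coeffOf_ne_zero hd)⟩ (hmax d hd)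

end PrecL

section Existence

variable {n q : ℕ} {k : Type} [Field k] {l : Fin q → ℕ} {lt0 : Expo n q → Expo n q → Prop}
  {ι : Type*}

def psiWeight (l : Fin q → ℕ) (C : ℕ) (β : Fin q →₀ ℕ) : ℕ := degSum β + C * Lform l β

lemma psiWeight_add (C : ℕ) (β γ : Fin q →₀ ℕ) :
    psiWeight l C (β + γ) = psiWeight l C β + psiWeight l C γ := by
  simp only [psiWeight, degSum_add, Lform_add]
  ring

lemma degSum_le_psiWeight (C : ℕ) (β : Fin q →₀ ℕ) : degSum β ≤ psiWeight l C β :=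
  Nat.le_add_right _ _

lemma psiWeight_le_of_precL {C : ℕ} {d e : Expo n q} (hd : degSum d.2 ≤ C)
    (h : PrecL l lt0 d e) : psiWeight l C d.2 ≤ psiWeight l C e.2 := by
  rcases h with h | ⟨hL, h⟩
  · have := Nat.mul_le_mul_left C (Nat.succ_le_of_lt h)
    simp only [psiWeight, Nat.mul_succ] at *
    omega
  · simp only [psiWeight, hL]
    grind

variable (l) (P : ι → Rxz n q k) (ε : ι → Expo n q) (κ : Expo n q → ι) (C B : ℕ)

def quotCoeff (c : Expo n q → k) (i : ι) (u : Expo n q) : k :=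
  if κ (u + ε i) = i ∧ psiWeight l C (u + ε i).2 ≤ B then c (u + ε i) else 0

def tailCoeff [Fintype ι] (c : Expo n q → k) (v : Expo n q) : k :=
  ∑ i, ∑ p ∈ antidiagonal v,
    if p.2 = ε i then 0 else quotCoeff l ε κ C B c i p.1 * coeffOf (P i) p.2

variable {l P ε κ C B}

lemma quotCoeff_ne_zero {c : Expo n q → k} {i : ι} {u : Expo n q}
    (h : quotCoeff l ε κ C B c i u ≠ 0) :
    κ (u + ε i) = i ∧ psiWeight l C (u + ε i).2 ≤ B := by
  by_contra hg
  exact h (if_neg hg)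

lemma finite_setOf_quotCoeff_ne_zero (c : Expo n q → k) (i : ι) :
    {β | ∃ α, quotCoeff l ε κ C B c i (α, β) ≠ 0}.Finite := by
  refine (Finsupp.finite_of_degree_le B).subset fun β ⟨α, h⟩ => ?_
  have hB := (quotCoeff_ne_zero h).2
  rw [Set.mem_ofPred_eq, ← degSum_eq_degree]
  calc degSum β ≤ degSum (β + (ε i).2) := by rw [degSum_add]; omega
    _ ≤ psiWeight l C (β + (ε i).2) := degSum_le_psiWeight C _
    _ ≤ B := hB

lemma sum_antidiagonal_snd_eq_quotCoeff_mul (c : Expo n q → k) {v : Expo n q}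
    (hv : psiWeight l C v.2 ≤ B) (hκ : inShift (ε (κ v)) v) (i : ι) :
    ∑ p ∈ antidiagonal v, (if p.2 = ε i then quotCoeff l ε κ C B c i p.1 * coeffOf (P i) p.2
      else 0) = if κ v = i then c v * coeffOf (P i) (ε i) else 0 := by
  by_cases hi : κ v = i
  · subst hi
    obtain ⟨γ, hγ⟩ := hκ
    have hγ' : γ + ε (κ v) = v := (add_comm _ _).trans hγ.symm
    rw [if_pos rfl, Finset.sum_eq_single_of_mem (γ, ε (κ v)) (mem_antidiagonal.2 hγ')]
    · simp [quotCoeff, hγ', hv]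
    · rintro ⟨u, d⟩ hp hne
      refine if_neg fun hd => hne ?_
      simp only at hd
      subst hd
      have hu : u = γ := add_right_cancel ((mem_antidiagonal.1 hp).trans hγ'.symm)
      rw [hu]
  · rw [if_neg hi]
    refine Finset.sum_eq_zero fun p hp => ?_
    split_ifs with hd
    · rw [quotCoeff, if_neg, zero_mul]
      rw [← hd, mem_antidiagonal.1 hp]
      exact fun h => hi h.1
    · rfl

variable [Fintype ι]

lemma sum_quotCoeff_mul_eq (c : Expo n q → k) {v : Expo n q} (hv : psiWeight l C v.2 ≤ B)
    (hκ : inShift (ε (κ v)) v) :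
    ∑ i, ∑ p ∈ antidiagonal v, quotCoeff l ε κ C B c i p.1 * coeffOf (P i) p.2 =
      c v * coeffOf (P (κ v)) (ε (κ v)) + tailCoeff l P ε κ C B c v := by
  have split : ∀ i, ∀ p : Expo n q × Expo n q,
      quotCoeff l ε κ C B c i p.1 * coeffOf (P i) p.2 =
      (if p.2 = ε i then quotCoeff l ε κ C B c i p.1 * coeffOf (P i) p.2 else 0) +
      (if p.2 = ε i then 0 else quotCoeff l ε κ C B c i p.1 * coeffOf (P i) p.2) := by
    intro i p
    split_ifs <;> simp
  rw [Finset.sum_congr rfl fun i _ => Finset.sum_congr rfl fun p _ => split i p]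
  simp only [Finset.sum_add_distrib, sum_antidiagonal_snd_eq_quotCoeff_mul c hv hκ,
    Finset.sum_ite_eq, Finset.mem_univ, if_true, tailCoeff]

lemma tailCoeff_congr (hadd : ∀ a b c : Expo n q, lt0 a b → lt0 (a + c) (b + c))
    (he : ∀ i, IsPrivExp (PrecL l lt0) (P i) (ε i)) {c c' : Expo n q → k} {v : Expo n q}
    (h : ∀ w, PrecL l lt0 v w ∧ degSum w.2 ≤ B → c w = c' w) :
    tailCoeff l P ε κ C B c v = tailCoeff l P ε κ C B c' v := by
  refine Finset.sum_congr rfl fun i _ => Finset.sum_congr rfl fun p hp => ?_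
  split_ifs with hd
  · rfl
  by_cases hP : coeffOf (P i) p.2 = 0
  · simp [hP]
  congr 1
  unfold quotCoeff
  split_ifs with hg
  · refine h _ ⟨?_, (degSum_le_psiWeight C _).trans hg.2⟩
    rw [← mem_antidiagonal.1 hp]
    simpa only [add_comm p.1] using precL_add_right hadd p.1 (((he i).2 _ hP).resolve_left hd)
  · rfl

lemma sum_quotCoeff_mul_eq_zero (he : ∀ i, IsPrivExp (PrecL l lt0) (P i) (ε i))
    (hC : ∀ i d, coeffOf (P i) d ≠ 0 → degSum d.2 ≤ C) (c : Expo n q → k) {v : Expo n q}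
    (hv : ¬ psiWeight l C v.2 ≤ B) :
    ∑ i, ∑ p ∈ antidiagonal v, quotCoeff l ε κ C B c i p.1 * coeffOf (P i) p.2 = 0 := by
  refine Finset.sum_eq_zero fun i _ => Finset.sum_eq_zero fun p hp => ?_
  by_contra h
  have hP := right_ne_zero_of_mul h
  have hd : psiWeight l C p.2.2 ≤ psiWeight l C (ε i).2 := by
    rcases (he i).2 _ hP with hd | hd
    · rw [hd]
    · exact psiWeight_le_of_precL (hC i _ hP) hd
  apply hv
  calc psiWeight l C v.2 = psiWeight l C p.1.2 + psiWeight l C p.2.2 := by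
        rw [← mem_antidiagonal.1 hp, Prod.snd_add, psiWeight_add]
    _ ≤ psiWeight l C (p.1 + ε i).2 := by rw [Prod.snd_add, psiWeight_add]; omega
    _ ≤ B := (quotCoeff_ne_zero (left_ne_zero_of_mul h)).2

theorem exists_sum_mul_eq (hwf : WellFounded lt0)
    (hadd : ∀ a b c : Expo n q, lt0 a b → lt0 (a + c) (b + c))
    (he : ∀ i, IsPrivExp (PrecL l lt0) (P i) (ε i)) (hκ : ∀ v, inShift (ε (κ v)) v)
    (F : Rxz n q k) :
    ∃ Q : ι → Rxz n q k, F = ∑ i, Q i * P i ∧ ∀ i, ∀ d ∈ newtonDiag (Q i), κ (d + ε i) = i := by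
  let C := Finset.univ.sup fun i => (P i).support.sup degSum
  have hC : ∀ i d, coeffOf (P i) d ≠ 0 → degSum d.2 ≤ C := fun i d hd =>
    (Finset.le_sup (mem_support_of_coeffOf_ne_zero hd)).trans
      (Finset.le_sup (f := fun i => (P i).support.sup degSum) (Finset.mem_univ i))
  let B := F.support.sup (psiWeight l C)
  obtain ⟨c, hc⟩ := (wellFounded_precL_swap_of_degSum_le hwf B).exists_fix_eq
    (fun c v => (coeffOf F v - tailCoeff l P ε κ C B c v) / coeffOf (P (κ v)) (ε (κ v)))
    fun c c' v h => by rw [tailCoeff_congr hadd he h]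
  choose Q hQ using fun i =>
    exists_coeffOf_eq _ (finite_setOf_quotCoeff_ne_zero (l := l) (ε := ε) (κ := κ) (C := C) c i)
  refine ⟨Q, ext_coeffOf fun v => ?_, fun i d hd =>
    (quotCoeff_ne_zero ((hQ i d).symm.trans_ne hd)).1⟩
  simp only [coeffOf_sum, coeffOf_mul, hQ]
  by_cases hv : psiWeight l C v.2 ≤ B
  · rw [sum_quotCoeff_mul_eq c hv (hκ v), hc v, div_mul_cancel₀ _ (he _).1, sub_add_cancel]
  · rw [sum_quotCoeff_mul_eq_zero he hC c hv]
    by_contra h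
    exact hv (Finset.le_sup (mem_support_of_coeffOf_ne_zero h))

end Existence

section Partition

variable {n q r : ℕ} {e : Fin r → Expo n q} {v : Expo n q}

lemma eq_of_mem_deltaJ {i j : Fin r} (hi : v ∈ DeltaJ e i) (hj : v ∈ DeltaJ e j) : i = j := by
  rcases lt_trichotomy i j with h | h | h
  · exact absurd hi.1 (hj.2 i h)
  · exact h
  · exact absurd hj.1 (hi.2 j h)

lemma exists_mem_deltaJ_of_inShift {j : Fin r} (h : inShift (e j) v) : ∃ i, v ∈ DeltaJ e i := by
  let s := Finset.univ.filter fun i => inShift (e i) v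
  have hs : s.Nonempty := ⟨j, by simpa [s] using h⟩
  refine ⟨s.min' hs, (Finset.mem_filter.1 (s.min'_mem hs)).2, fun i hi hiv => ?_⟩
  exact absurd (s.min'_le i (by simpa [s] using hiv)) (not_le.2 hi)

variable (e) in
def partitionIndex (v : Expo n q) : Option (Fin r) :=
  if h : ∃ j, v ∈ DeltaJ e j then some h.choose else none

lemma partitionIndex_eq_some_iff {j : Fin r} : partitionIndex e v = some j ↔ v ∈ DeltaJ e j := by
  unfold partitionIndex
  split_ifs with h
  · exact ⟨fun hj => Option.some_injective _ hj ▸ h.choose_spec,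
      fun hj => congrArg some (eq_of_mem_deltaJ h.choose_spec hj)⟩
  · exact ⟨nofun, fun hj => h ⟨j, hj⟩⟩

lemma partitionIndex_eq_none_iff : partitionIndex e v = none ↔ v ∈ DeltaBar e := by
  unfold partitionIndex
  split_ifs with h
  · obtain ⟨j, hj⟩ := h
    exact ⟨nofun, fun hv => hv j hj.1⟩
  · exact ⟨fun _ j hj => h (exists_mem_deltaJ_of_inShift hj), fun _ => rfl⟩

lemma inShift_partitionIndex (v : Expo n q) :
    inShift ((partitionIndex e v).elim 0 e) v := by
  cases h : partitionIndex e v with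
  | none => exact ⟨v, (zero_add v).symm⟩
  | some j => exact (partitionIndex_eq_some_iff.1 h).1

lemma eq_zero_or_forall_mem_newtonDiag_iff {A : Type} [CommRing A] {F : Rxz n q A}
    {p : Expo n q → Prop} : (F = 0 ∨ ∀ d ∈ newtonDiag F, p d) ↔ ∀ d ∈ newtonDiag F, p d := by
  refine or_iff_right_of_imp ?_
  rintro rfl d hd
  exact absurd (coeffOf_zero d) hd

lemma forall_partitionIndex_iff {A : Type} [CommRing A] {Q : Option (Fin r) → Rxz n q A} :
    (∀ o, ∀ d ∈ newtonDiag (Q o), partitionIndex e (d + o.elim 0 e) = o) ↔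
      (∀ j, Q (some j) = 0 ∨ ∀ d ∈ newtonDiag (Q (some j)), d + e j ∈ DeltaJ e j) ∧
        (Q none = 0 ∨ newtonDiag (Q none) ⊆ DeltaBar e) := by
  simp only [Option.forall, eq_zero_or_forall_mem_newtonDiag_iff, Set.subset_def,
    partitionIndex_eq_some_iff, partitionIndex_eq_none_iff, Option.elim, add_zero]
  exact and_comm

end Partition

theorem division_theorem_general
    (n q : ℕ)
    (k : Type) [Field k]
    (l : Fin q → ℕ)
    (lt0 : Expo n q → Expo n q → Prop)
    (hlt0_tri : ∀ a b : Expo n q, lt0 a b ∨ a = b ∨ lt0 b a)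
    (hlt0_trans : ∀ a b c : Expo n q, lt0 a b → lt0 b c → lt0 a c)
    (hlt0_wf : WellFounded lt0)
    (hlt0_add : ∀ a b c : Expo n q, lt0 a b → lt0 (a + c) (b + c))
    (r : ℕ) (P : Fin r → Rxz n q k)
    (e : Fin r → Expo n q) (he : ∀ j, IsPrivExp (PrecL l lt0) (P j) (e j))
    (F : Rxz n q k) :
    ∃! QR : (Fin r → Rxz n q k) × Rxz n q k,
      (F = ∑ j, QR.1 j * P j + QR.2) ∧
      (∀ j, QR.1 j = 0 ∨ ∀ d ∈ newtonDiag (QR.1 j), d + e j ∈ DeltaJ e j) ∧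
      (QR.2 = 0 ∨ newtonDiag QR.2 ⊆ DeltaBar e) := by
  have := isStrictTotalOrder_precL (l := l) hlt0_tri hlt0_trans hlt0_wf
  have he' : ∀ o : Option (Fin r), IsPrivExp (PrecL l lt0) (o.elim 1 P) (o.elim 0 e) := by
    rintro (_ | j)
    exacts [isPrivExp_one _, he j]
  obtain ⟨Q, hF, hQ⟩ := exists_sum_mul_eq hlt0_wf hlt0_add he' inShift_partitionIndex F
  refine ⟨(fun j => Q (some j), Q none), ⟨?_, forall_partitionIndex_iff.1 hQ⟩, ?_⟩
  · simpa [Fintype.sum_option, add_comm] using hF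
  rintro ⟨Q', R'⟩ ⟨hF', hQR'⟩
  have hQQ' := eq_of_sum_mul_eq_sum_mul (fun a b c h => precL_add_right hlt0_add c h)
    (fun G hG => exists_isPrivExp_precL hlt0_tri hlt0_trans hlt0_wf hG) he'
    (Q := fun o => o.elim R' Q') (forall_partitionIndex_iff.2 hQR') hQ (by
      rw [← hF]; simpa [Fintype.sum_option, add_comm] using hF'.symm)
  exact Prod.ext (funext fun j => congrFun hQQ' (some j)) (congrFun hQQ' none)

/-- Division theorem (commutative case of Théorème 3.1): division of any `F ∈ R_k` by
nonzero `P_1, …, P_r` with privileged exponents `e_1, …, e_r`, with a unique quotient-remainder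
tuple subject to the support conditions given by the partition `Δ_1, …, Δ_r, Δ̄`. -/
theorem division_theorem
    (n q : ℕ) (hn : 0 < n) (hq : 0 < q)
    (k : Type) [Field k] [CharZero k]
    (l : Fin q → ℕ)
    (lt0 : Expo n q → Expo n q → Prop)
    (hlt0_tri : ∀ a b : Expo n q, lt0 a b ∨ a = b ∨ lt0 b a)
    (hlt0_trans : ∀ a b c : Expo n q, lt0 a b → lt0 b c → lt0 a c)
    (hlt0_wf : WellFounded lt0)
    (hlt0_add : ∀ a b c : Expo n q, lt0 a b → lt0 (a + c) (b + c))
    (r : ℕ) (P : Fin r → Rxz n q k) (hP : ∀ j, P j ≠ 0)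
    (e : Fin r → Expo n q) (he : ∀ j, IsPrivExp (PrecL l lt0) (P j) (e j))
    (F : Rxz n q k) :
    ∃! QR : (Fin r → Rxz n q k) × Rxz n q k,
      (F = ∑ j, QR.1 j * P j + QR.2) ∧
      (∀ j, QR.1 j = 0 ∨ ∀ d ∈ newtonDiag (QR.1 j), d + e j ∈ DeltaJ e j) ∧
      (QR.2 = 0 ∨ newtonDiag QR.2 ⊆ DeltaBar e) :=
  division_theorem_general n q k l lt0 hlt0_tri hlt0_trans hlt0_wf hlt0_add r P e he F

end
end

section
/- Correctness of the formal elimination of the local variables (Proposition of Section 4, version formelle de l'algorithme de Oaku). Let J be an ideal of k[[x]][s] such that J ∩ k[s] ≠ (0), and let b ∈ k[s] be the monic generator of J ∩ k[s]. Let J̄ be the ideal of k̄[[x]][s] generated by the image of J, let b₀ ∈ k̄[s] be the monic generator of the ideal {g(0,s) : g ∈ J̄} of k̄[s] (this ideal is nonzero because it contains b), and let s_1,…,s_m be the distinct roots of b₀ in k̄. For each i = 1,…,m, let l_i be the least natural number l for which there exists h ∈ k̄[[x]][s] with h·(s−s_i)^l ∈ J̄ and h(0,s_i) ≠ 0. Then,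 as elements of k̄[s], b = ∏_{i=1}^m (s−s_i)^{l_i}; in particular this product has all its coefficients in k, and it generates the ideal J̄ ∩ k̄[s] of k̄[s]. -/
/-!
Eliminating `s` commutes with extending scalars along any field extension `K/k`: if `r ∈ J̄ ∩ K[s]`
has degree `< deg b`, applying a `k`-linear functional `K → k` to every coefficient of every
power series maps `J̄` back into `J`, so each such image of `r` is a multiple of `b` of smaller
degree, hence zero, and `r = 0`. Thus `J̄ ∩ k̄[s] = (b)`.

Over `k̄` the same ideal is computed locally. A nonzero `q ∈ J̄ ∩ k̄[s]` is
`(s - sᵢ)^{rootMultiplicity} · h` with `h(0, sᵢ) ≠ 0`, so `(s - sᵢ)^{lᵢ} ∣ q` by minimality of `lᵢ`.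
Conversely, with `P = ∏ (s - sᵢ)^{lᵢ}`, the colon ideal `(J̄ : P)` contains `b`, the witnesses `hᵢ`,
and some `g` with `g(0, s) = b₀`. A maximal ideal containing `b` contains some `s - c`, and then
all its elements vanish at `(0, c)`; no such `c` kills all of these elements, so `(J̄ : P)` is
the unit ideal and `P ∈ J̄`. Comparing monic generators gives `b = P`.
-/

open Classical Polynomial

noncomputable section

/-- The ring A[[x]][s], polynomials in one variable s over A[[x]]. -/
abbrev RS (n : ℕ) (A : Type) [CommRing A] := Polynomial (MvPowerSeries (Fin n) A)

/-- The inclusion A[s] → A[[x]][s], applied coefficientwise. -/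
def toRS (n : ℕ) (A : Type) [CommRing A] : Polynomial A →+* RS n A :=
  Polynomial.mapRingHom (MvPowerSeries.C : A →+* MvPowerSeries (Fin n) A)

/-- The evaluation g ↦ g(0, s) : A[[x]][s] → A[s], applying the constant-term map
A[[x]] → A to each coefficient. -/
def evAtZero (n : ℕ) (A : Type) [CommRing A] : RS n A →+* Polynomial A :=
  Polynomial.mapRingHom (MvPowerSeries.constantCoeff : MvPowerSeries (Fin n) A →+* A)

/-- Coefficientwise extension of scalars A[[x]][s] → B[[x]][s] along a ring map A → B. -/
def extScalars (n : ℕ) {A B : Type} [CommRing A] [CommRing B] (f : A →+* B) :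
    RS n A →+* RS n B :=
  Polynomial.mapRingHom (MvPowerSeries.map f : MvPowerSeries (Fin n) A →+* MvPowerSeries (Fin n) B)

namespace Polynomial

variable {R S : Type*} [Semiring R] [Semiring S]

def mapAddMonoidHom (ψ : R →+ S) : R[X] →+ S[X] where
  toFun p := p.sum fun j a => monomial j (ψ a)
  map_zero' := sum_zero_index _
  map_add' p q := sum_add_index _ _ _ (by simp) (by simp)

@[simp]
lemma coeff_mapAddMonoidHom (ψ : R →+ S) (p : R[X]) (j : ℕ) :
    (mapAddMonoidHom ψ p).coeff j = ψ (p.coeff j) := by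
  simp +contextual [mapAddMonoidHom, coeff_monomial, Polynomial.sum_def]

lemma degree_mapAddMonoidHom_le (ψ : R →+ S) (p : R[X]) :
    (mapAddMonoidHom ψ p).degree ≤ p.degree :=
  (degree_le_iff_coeff_zero _ _).mpr fun m hm => by simp [coeff_eq_zero_of_degree_lt hm]

lemma mapAddMonoidHom_map_mul (e : R →+* S) (ψ : S →+ R) (hψ : ∀ a y, ψ (e a * y) = a * ψ y)
    (u : R[X]) (g : S[X]) :
    mapAddMonoidHom ψ (u.map e * g) = u * mapAddMonoidHom ψ g := by
  ext j
  simp [coeff_mul, hψ]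

end Polynomial

lemma Ideal.apply_mem_of_mem_map {A B : Type*} [CommRing A] [CommRing B] (e : A →+* B)
    (φ : B →+ A) (hφ : ∀ a y, φ (e a * y) = a * φ y) {J : Ideal A} {x : B}
    (hx : x ∈ J.map e) : φ x ∈ J := by
  suffices ∀ c, φ (c * x) ∈ J by simpa using this 1
  refine Submodule.span_induction ?_ ?_ ?_ ?_ hx
  · rintro _ ⟨a, ha, rfl⟩ c
    rw [mul_comm, hφ]
    exact J.mul_mem_right _ ha
  · simp
  · intro y z _ _ hy hz c
    rw [mul_add, map_add]
    exact J.add_mem (hy c) (hz c)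
  · intro d y _ hy c
    rw [smul_eq_mul, ← mul_assoc]
    exact hy _

namespace MvPowerSeries

variable {σ R S : Type*} [CommSemiring R] [CommSemiring S] [Algebra R S]

def mapₗ (π : S →ₗ[R] R) : MvPowerSeries σ S →ₗ[R] MvPowerSeries σ R :=
  π.compLeft _

@[simp]
lemma coeff_mapₗ (π : S →ₗ[R] R) (F : MvPowerSeries σ S) (d : σ →₀ ℕ) :
    coeff d (mapₗ π F) = π (coeff d F) := rfl

lemma mapₗ_map_mul (π : S →ₗ[R] R) (u : MvPowerSeries σ R) (F : MvPowerSeries σ S) :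
    mapₗ π (map (algebraMap R S) u * F) = u * mapₗ π F := by
  ext d
  simp [coeff_mul, ← Algebra.smul_def]

lemma mapₗ_C (π : S →ₗ[R] R) (a : S) : mapₗ π (C a : MvPowerSeries σ S) = C (π a) := by
  ext d
  simp [coeff_C, apply_ite π]

end MvPowerSeries

section Basic

variable {n : ℕ}

lemma evAtZero_toRS {A : Type} [CommRing A] (p : A[X]) : evAtZero n A (toRS n A p) = p := by
  simp only [evAtZero, toRS, coe_mapRingHom, Polynomial.map_map]
  convert Polynomial.map_id
  ext a
  simp

lemma toRS_X_sub_C {A : Type} [CommRing A] (c : A) :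
    toRS n A (X - C c) = X - C (MvPowerSeries.C c) := by
  simp [toRS]

lemma constantCoeff_eval_C {A : Type} [CommRing A] (g : RS n A) (c : A) :
    MvPowerSeries.constantCoeff (g.eval (MvPowerSeries.C c)) = (evAtZero n A g).eval c := by
  rw [evAtZero, coe_mapRingHom, eval_map, ← eval₂_at_apply, MvPowerSeries.constantCoeff_C]

lemma extScalars_toRS {A B : Type} [CommRing A] [CommRing B] (f : A →+* B) (p : A[X]) :
    extScalars n f (toRS n A p) = toRS n B (p.map f) := by
  simp only [extScalars, toRS, coe_mapRingHom, Polynomial.map_map]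
  congr 1
  ext a : 1
  simp [MvPowerSeries.map_C]

end Basic

section Descent

variable {n : ℕ} {k K : Type} [Field k] [Field K] [Algebra k K]

lemma mapAddMonoidHom_mem_comap_toRS {J : Ideal (RS n k)} {q : K[X]}
    (hq : q ∈ (J.map (extScalars n (algebraMap k K))).comap (toRS n K)) (π : Module.Dual k K) :
    mapAddMonoidHom π.toAddMonoidHom q ∈ J.comap (toRS n k) := by
  have key := Ideal.apply_mem_of_mem_map (extScalars n (algebraMap k K))
    (mapAddMonoidHom (MvPowerSeries.mapₗ π).toAddMonoidHom)
    (fun u g => mapAddMonoidHom_map_mul (MvPowerSeries.map (algebraMap k K)) _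
      (MvPowerSeries.mapₗ_map_mul π) u g) hq
  rw [Ideal.mem_comap]
  convert key using 2
  ext j : 1
  simp [toRS, MvPowerSeries.mapₗ_C]

theorem comap_toRS_map_extScalars {J : Ideal (RS n k)} {b : k[X]} (hb : b.Monic)
    (hJ : J.comap (toRS n k) = Ideal.span {b}) :
    (J.map (extScalars n (algebraMap k K))).comap (toRS n K)
      = Ideal.span {b.map (algebraMap k K)} := by
  set I := (J.map (extScalars n (algebraMap k K))).comap (toRS n K)
  have hbI : b.map (algebraMap k K) ∈ I := by
    have : toRS n k b ∈ J := by
      rw [← Ideal.mem_comap, hJ]; exact Ideal.mem_span_singleton_self b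
    rw [Ideal.mem_comap, ← extScalars_toRS]
    exact Ideal.mem_map_of_mem _ this
  refine le_antisymm (fun q hq => ?_) (Ideal.span_le.mpr (by simpa using hbI))
  have hrI : q %ₘ b.map (algebraMap k K) ∈ I := by
    rw [modByMonic_eq_sub_mul_div]
    exact I.sub_mem hq (I.mul_mem_right _ hbI)
  have hr : q %ₘ b.map (algebraMap k K) = 0 := by
    have hdeg : (q %ₘ b.map (algebraMap k K)).degree < b.degree := by
      simpa [degree_map] using degree_modByMonic_lt q (hb.map (algebraMap k K))
    ext j
    rw [coeff_zero, ← Module.forall_dual_apply_eq_zero_iff k]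
    intro π
    have hπ : mapAddMonoidHom π.toAddMonoidHom (q %ₘ b.map (algebraMap k K)) = 0 := by
      refine eq_zero_of_dvd_of_degree_lt ?_ ((degree_mapAddMonoidHom_le _ _).trans_lt hdeg)
      rw [← Ideal.mem_span_singleton, ← hJ]
      exact mapAddMonoidHom_mem_comap_toRS hrI π
    simpa using congrArg (coeff · j) hπ
  exact Ideal.mem_span_singleton.mpr ((modByMonic_eq_zero_iff_dvd (hb.map _)).mp hr)

end Descent

section PointEvaluation

variable {n : ℕ} {K : Type} [Field K]

lemma eval_evAtZero_eq_zero_of_mem {I : Ideal (RS n K)} (hI : I ≠ ⊤) {c : K}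
    (hc : X - C (MvPowerSeries.C c) ∈ I) {g : RS n K} (hg : g ∈ I) :
    (evAtZero n K g).eval c = 0 := by
  -- `g ≡ g(s = c)` modulo `s - c`, and `g(s = c) ∈ K[[x]]` is a unit unless its constant term is 0.
  by_contra h
  set r := g.eval (MvPowerSeries.C c)
  have hr : IsUnit r := by
    rw [MvPowerSeries.isUnit_iff_constantCoeff, constantCoeff_eval_C]
    exact Ne.isUnit h
  obtain ⟨w, hw⟩ := X_sub_C_dvd_sub_C_eval (a := MvPowerSeries.C c) (p := g)
  have hrI : C r ∈ I := by
    rw [show C r = g - (g - C r) by ring, hw]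
    exact I.sub_mem hg (I.mul_mem_right _ hc)
  exact hI (I.eq_top_of_isUnit_mem hrI (hr.map C))

lemma exists_X_sub_C_mem_of_isPrime [IsAlgClosed K] {P : Ideal (RS n K)} (hP : P.IsPrime)
    {p : K[X]} (hp : p ≠ 0) (hpP : toRS n K p ∈ P) : ∃ c, X - C (MvPowerSeries.C c) ∈ P := by
  have hQ : (P.comap (toRS n K)).IsPrime := Ideal.comap_isPrime _ _
  rw [← Ideal.mem_comap, ← C_leadingCoeff_mul_prod_multiset_X_sub_C (p := p)
    IsAlgClosed.card_roots_eq_natDegree] at hpP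
  rcases hQ.mem_or_mem hpP with hlc | hprod
  · exact absurd (Ideal.eq_top_of_isUnit_mem _ hlc (isUnit_C.mpr (by simpa using hp))) hQ.ne_top
  · obtain ⟨_, hmem, hlin⟩ := (hQ.multiset_prod_mem_iff_exists_mem _).mp hprod
    obtain ⟨c, -, rfl⟩ := Multiset.mem_map.mp hmem
    exact ⟨c, by rwa [Ideal.mem_comap, toRS_X_sub_C] at hlin⟩

theorem Ideal.eq_top_of_forall_exists_eval_evAtZero_ne_zero [IsAlgClosed K] {I : Ideal (RS n K)}
    {p : K[X]} (hp : p ≠ 0) (hpI : toRS n K p ∈ I)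
    (h : ∀ c, ∃ g ∈ I, (evAtZero n K g).eval c ≠ 0) : I = ⊤ := by
  by_contra hI
  obtain ⟨M, hM, hIM⟩ := I.exists_le_maximal hI
  obtain ⟨c, hc⟩ := exists_X_sub_C_mem_of_isPrime hM.isPrime hp (hIM hpI)
  obtain ⟨g, hg, hgc⟩ := h c
  exact hgc (eval_evAtZero_eq_zero_of_mem hM.ne_top hc (hIM hg))

end PointEvaluation

section Multiplicities

variable {n : ℕ} {K : Type} [Field K]

def localExponents (I : Ideal (RS n K)) (c : K) : Set ℕ :=
  {l | ∃ h : RS n K, h * (X - C (MvPowerSeries.C c)) ^ l ∈ I ∧ (evAtZero n K h).eval c ≠ 0}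

lemma rootMultiplicity_mem_localExponents {I : Ideal (RS n K)} {q : K[X]} (hq0 : q ≠ 0)
    (hq : toRS n K q ∈ I) (c : K) : q.rootMultiplicity c ∈ localExponents I c := by
  refine ⟨toRS n K (q /ₘ (X - C c) ^ q.rootMultiplicity c), ?_, ?_⟩
  · rwa [← toRS_X_sub_C, ← map_pow, ← map_mul, mul_comm, pow_mul_divByMonic_rootMultiplicity_eq]
  · rw [evAtZero_toRS]
    exact eval_divByMonic_pow_rootMultiplicity_ne_zero c hq0

lemma pow_dvd_of_isLeast_localExponents {I : Ideal (RS n K)} {c : K} {l : ℕ}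
    (hl : IsLeast (localExponents I c) l) {q : K[X]} (hq : toRS n K q ∈ I) :
    (X - C c) ^ l ∣ q := by
  rcases eq_or_ne q 0 with rfl | hq0
  · exact dvd_zero _
  · exact (pow_dvd_pow _ (hl.2 (rootMultiplicity_mem_localExponents hq0 hq c))).trans
      (pow_rootMultiplicity_dvd q c)

variable {I : Ideal (RS n K)} {m : ℕ} {sm : Fin m → K} {li : Fin m → ℕ}

lemma prod_dvd_of_toRS_mem (hsm : Function.Injective sm)
    (hli : ∀ i, IsLeast (localExponents I (sm i)) (li i)) {q : K[X]} (hq : toRS n K q ∈ I) :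
    ∏ i, (X - C (sm i)) ^ li i ∣ q :=
  Fintype.prod_dvd_of_coprime (fun _ _ hij => (pairwise_coprime_X_sub_C hsm hij).pow)
    fun i => pow_dvd_of_isLeast_localExponents (hli i) hq

lemma toRS_prod_mem [IsAlgClosed K] {p : K[X]} (hp : p ≠ 0) (hpI : toRS n K p ∈ I)
    {b0 : K[X]} (hb0 : I.map (evAtZero n K) = Ideal.span {b0})
    (hroots : ∀ c, b0.IsRoot c ↔ ∃ i, sm i = c)
    (hli : ∀ i, IsLeast (localExponents I (sm i)) (li i)) :
    toRS n K (∏ i, (X - C (sm i)) ^ li i) ∈ I := by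
  set Q := I.colon (Ideal.span {toRS n K (∏ i, (X - C (sm i)) ^ li i)})
  have hIQ : I ≤ Q := fun g hg => Ideal.mem_colon_span_singleton.mpr (I.mul_mem_right _ hg)
  suffices Q = ⊤ by simpa using Ideal.mem_colon_span_singleton.mp (this ▸ Submodule.mem_top : 1 ∈ Q)
  refine Ideal.eq_top_of_forall_exists_eval_evAtZero_ne_zero hp (hIQ hpI) fun c => ?_
  by_cases hc : b0.IsRoot c
  · obtain ⟨i, rfl⟩ := (hroots c).mp hc
    obtain ⟨h, hhI, hh⟩ := (hli i).1
    refine ⟨h, Ideal.mem_colon_span_singleton.mpr ?_, hh⟩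
    rw [map_prod, ← Finset.mul_prod_erase _ _ (Finset.mem_univ i), ← mul_assoc, map_pow,
      toRS_X_sub_C]
    exact I.mul_mem_right _ hhI
  · obtain ⟨g, hg, hgb0⟩ := (Ideal.mem_map_iff_of_surjective _
      (fun q => ⟨toRS n K q, evAtZero_toRS q⟩)).mp (hb0 ▸ Ideal.mem_span_singleton_self b0)
    exact ⟨g, hIQ hg, by rwa [hgb0]⟩

theorem comap_toRS_eq_span_prod [IsAlgClosed K] {p : K[X]} (hp : p ≠ 0)
    (hpI : toRS n K p ∈ I) {b0 : K[X]} (hb0 : I.map (evAtZero n K) = Ideal.span {b0})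
    (hsm : Function.Injective sm) (hroots : ∀ c, b0.IsRoot c ↔ ∃ i, sm i = c)
    (hli : ∀ i, IsLeast (localExponents I (sm i)) (li i)) :
    I.comap (toRS n K) = Ideal.span {∏ i, (X - C (sm i)) ^ li i} :=
  le_antisymm (fun _ hq => Ideal.mem_span_singleton.mpr (prod_dvd_of_toRS_mem hsm hli hq))
    (Ideal.span_le.mpr (by simpa using toRS_prod_mem hp hpI hb0 hroots hli))

end Multiplicities

theorem oaku_formal_elimination_general
    (n : ℕ) (k : Type) [Field k]
    (J : Ideal (RS n k))
    (b : Polynomial k) (hbMonic : b.Monic)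
    (hb : Ideal.comap (toRS n k) J = Ideal.span {b})
    (Jbar : Ideal (RS n (AlgebraicClosure k)))
    (hJbar : Jbar = Ideal.map (extScalars n (algebraMap k (AlgebraicClosure k))) J)
    (b0 : Polynomial (AlgebraicClosure k))
    (hb0 : Ideal.map (evAtZero n (AlgebraicClosure k)) Jbar = Ideal.span {b0})
    (m : ℕ) (sm : Fin m → AlgebraicClosure k) (hsm : Function.Injective sm)
    (hroots : ∀ c : AlgebraicClosure k, b0.IsRoot c ↔ ∃ i, sm i = c)
    (li : Fin m → ℕ)
    (hli : ∀ i, IsLeast {l : ℕ | ∃ h : RS n (AlgebraicClosure k),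
        h * (X - C ((MvPowerSeries.C : AlgebraicClosure k →+* MvPowerSeries (Fin n) (AlgebraicClosure k)) (sm i))) ^ l ∈ Jbar ∧
        Polynomial.eval (sm i) (evAtZero n (AlgebraicClosure k) h) ≠ 0} (li i)) :
    Polynomial.map (algebraMap k (AlgebraicClosure k)) b
        = ∏ i, (X - C (sm i)) ^ (li i) ∧
    (∀ j : ℕ, (∏ i, (X - C (sm i)) ^ (li i)).coeff j ∈
        (algebraMap k (AlgebraicClosure k)).range) ∧
    Ideal.comap (toRS n (AlgebraicClosure k)) Jbar
        = Ideal.span {∏ i, (X - C (sm i)) ^ (li i)} := by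
  have hJbar_b : Jbar.comap (toRS n _) = Ideal.span {b.map (algebraMap k (AlgebraicClosure k))} :=
    hJbar ▸ comap_toRS_map_extScalars hbMonic hb
  have hbJbar : toRS n _ (b.map (algebraMap k (AlgebraicClosure k))) ∈ Jbar := by
    rw [← Ideal.mem_comap, hJbar_b]
    exact Ideal.mem_span_singleton_self _
  have hJbar_prod := comap_toRS_eq_span_prod (hbMonic.map _).ne_zero hbJbar hb0 hsm hroots hli
  have hb_eq : b.map (algebraMap k (AlgebraicClosure k)) = ∏ i, (X - C (sm i)) ^ li i :=
    eq_of_monic_of_associated (hbMonic.map _)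
      (monic_prod_of_monic _ _ fun i _ => (monic_X_sub_C _).pow _)
      (Ideal.span_singleton_eq_span_singleton.mp (hJbar_b.symm.trans hJbar_prod))
  exact ⟨hb_eq, fun j => hb_eq ▸ ⟨b.coeff j, (coeff_map _ j).symm⟩, hJbar_prod⟩

/-- Correctness of the formal elimination of the local variables (Proposition of
Section 4): if b is the monic generator of J ∩ k[s] ≠ (0), J̄ the ideal of k̄[[x]][s]
generated by J, b₀ the monic generator of {g(0,s) : g ∈ J̄} with distinct roots
s_1, …, s_m, and l_i the least l such that some h ∈ k̄[[x]][s] satisfies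
h·(s−s_i)^l ∈ J̄ and h(0,s_i) ≠ 0, then b = ∏_i (s−s_i)^{l_i} in k̄[s]; in particular
this product has all its coefficients in k and generates J̄ ∩ k̄[s]. -/
theorem oaku_formal_elimination
    (n : ℕ) (hn : 0 < n) (k : Type) [Field k] [CharZero k]
    (J : Ideal (RS n k))
    (hJne : Ideal.comap (toRS n k) J ≠ ⊥)
    (b : Polynomial k) (hbMonic : b.Monic)
    (hb : Ideal.comap (toRS n k) J = Ideal.span {b})
    (Jbar : Ideal (RS n (AlgebraicClosure k)))
    (hJbar : Jbar = Ideal.map (extScalars n (algebraMap k (AlgebraicClosure k))) J)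
    (b0 : Polynomial (AlgebraicClosure k)) (hb0Monic : b0.Monic)
    (hb0 : Ideal.map (evAtZero n (AlgebraicClosure k)) Jbar = Ideal.span {b0})
    (m : ℕ) (sm : Fin m → AlgebraicClosure k) (hsm : Function.Injective sm)
    (hroots : ∀ c : AlgebraicClosure k, b0.IsRoot c ↔ ∃ i, sm i = c)
    (li : Fin m → ℕ)
    (hli : ∀ i, IsLeast {l : ℕ | ∃ h : RS n (AlgebraicClosure k),
        h * (X - C ((MvPowerSeries.C : AlgebraicClosure k →+* MvPowerSeries (Fin n) (AlgebraicClosure k)) (sm i))) ^ l ∈ Jbar ∧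
        Polynomial.eval (sm i) (evAtZero n (AlgebraicClosure k) h) ≠ 0} (li i)) :
    Polynomial.map (algebraMap k (AlgebraicClosure k)) b
        = ∏ i, (X - C (sm i)) ^ (li i) ∧
    (∀ j : ℕ, (∏ i, (X - C (sm i)) ^ (li i)).coeff j ∈
        (algebraMap k (AlgebraicClosure k)).range) ∧
    Ideal.comap (toRS n (AlgebraicClosure k)) Jbar
        = Ideal.span {∏ i, (X - C (sm i)) ^ (li i)} :=
  oaku_formal_elimination_general n k J b hbMonic hb Jbar hJbar b0 hb0 m sm hsm hroots li hli
end
end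

section
/- Unit lemma in k[[x]][s] (key step in the proof of the Proposition of Section 4). Let k be a field, n ≥ 1, and let E be an ideal of k[[x]][s] which contains a monic polynomial b ∈ k[s] and contains an element e such that e(0,s) = 1 (i.e., applying the constant-term map k[[x]] → k to every coefficient of e yields the constant polynomial 1). Then 1 ∈ E, i.e. E = k[[x]][s]. -/
/-!
Pass to a maximal ideal `M ⊇ E` of `R[s]`, `R = k[[x]]`. Since `M` contains the monic `b`,
`R[s]/M` is integral over `R`, so `M ∩ R` is a maximal ideal of `R`, which is local: hence
`M ∩ R = (x)`. Then `M` contains every polynomial whose reduction mod `(x)` vanishes, in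
particular `e - 1`, so `1 ∈ M`.
-/

open Classical

noncomputable section

namespace Polynomial

variable {R K : Type*} [CommRing R] [Field K]

theorem isMaximal_comap_C_of_monic_mem {M : Ideal R[X]} [M.IsMaximal] {p : R[X]}
    (hp : p.Monic) (hpM : p ∈ M) : (M.comap C).IsMaximal := by
  have hker : (⊥ : Ideal (R[X] ⧸ M)).comap ((Ideal.Quotient.mk M).comp C) = M.comap C := by
    rw [← Ideal.comap_comap, ← RingHom.ker_eq_comap_bot, Ideal.mk_ker]
  rw [← hker]
  let := Ideal.Quotient.field M
  exact Ideal.isMaximal_comap_of_isIntegral_of_isMaximal' _ (hp.quotient_isIntegral hpM) ⊥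

theorem ker_mapRingHom_le_of_isMaximal_comap_C [IsLocalRing R] {f : R →+* K}
    (hf : Function.Surjective f) {M : Ideal R[X]} (hM : (M.comap C).IsMaximal) :
    RingHom.ker (mapRingHom f) ≤ M := by
  have hkerf : RingHom.ker f = M.comap C :=
    (IsLocalRing.eq_maximalIdeal (RingHom.ker_isMaximal_of_surjective f hf)).trans
      (IsLocalRing.eq_maximalIdeal hM).symm
  rw [ker_mapRingHom, hkerf]
  exact Ideal.map_comap_le

theorem ideal_eq_top_of_monic_mem_of_map_eq_one [IsLocalRing R] {f : R →+* K}
    (hf : Function.Surjective f) {E : Ideal R[X]} {p : R[X]} (hp : p.Monic) (hpE : p ∈ E)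
    {e : R[X]} (heE : e ∈ E) (he : e.map f = 1) : E = ⊤ := by
  by_contra hE
  obtain ⟨M, hM, hEM⟩ := Ideal.exists_le_maximal E hE
  have hMC : (M.comap C).IsMaximal := isMaximal_comap_C_of_monic_mem hp (hEM hpE)
  have he1 : e - 1 ∈ M :=
    ker_mapRingHom_le_of_isMaximal_comap_C hf hMC (by simp [RingHom.mem_ker, he])
  exact hM.ne_top ((Ideal.eq_top_iff_one M).2 (by simpa using M.sub_mem (hEM heE) he1))

end Polynomial

theorem unit_lemma_general
    (n : ℕ) (k : Type) [Field k]
    (E : Ideal (RS n k))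
    (b : Polynomial k) (hb : b.Monic) (hbE : toRS n k b ∈ E)
    (e : RS n k) (heE : e ∈ E) (he : evAtZero n k e = 1) :
    E = ⊤ :=
  Polynomial.ideal_eq_top_of_monic_mem_of_map_eq_one
    (fun c => ⟨MvPowerSeries.C c, MvPowerSeries.constantCoeff_C c⟩) (hb.map _) hbE heE he

/-- Unit lemma in k[[x]][s]: an ideal E of k[[x]][s] containing a monic polynomial
b ∈ k[s] and an element e with e(0, s) = 1 is the whole ring. -/
theorem unit_lemma
    (n : ℕ) (hn : 0 < n) (k : Type) [Field k]
    (E : Ideal (RS n k))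
    (b : Polynomial k) (hb : b.Monic) (hbE : toRS n k b ∈ E)
    (e : RS n k) (heE : e ∈ E) (he : evAtZero n k e = 1) :
    E = ⊤ :=
  unit_lemma_general n k E b hb hbE e heE he

end
end

section
/- Rationality lemma (algebraic form of Lemme 5.3). Let m ≥ 1, let Q be a prime ideal of ℂ[y_1,…,y_m], and let V(Q) = {y ∈ ℂ^m : g(y) = 0 for all g ∈ Q}. Let p = Σ_{i=0}^N c_i·s^i ∈ ℂ[y][s] with c_N ≠ 0 (c_i ∈ ℂ[y]). Suppose there exists g₀ ∈ ℂ[y] \ Q such that for every y ∈ V(Q) with g₀(y) ≠ 0 one has c_N(y) ≠ 0 and, for every i = 0,…,N, the ratio c_i(y)/c_N(y) is a rational number (equivalently, the normalized polynomial Σ_i (c_i(y)/c_N(y)) s^i lies in ℚ[s]). Then there exists a monic polynomial q ∈ ℚ[s] of degree N such that every coefficient of p − c_N·q, viewed as a polynomial in s with coefficients in ℂ[y], belongs to Q. -/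
/-!
Let `τ = c_i / c_N` in the function field `Q.ResidueField = Frac(ℂ[y] ⧸ Q)` of `V(Q)`. For
`λ ∉ ℚ` the hypothesis makes `g₀ c_N` vanish on `V(Q) ∩ {c_i = λ c_N}`, so by the
Nullstellensatz `(τ - λ)⁻¹` is a polynomial divided by a power of `g₀ c_N`; all such quotients
lie in a subspace of countable dimension. A transcendental `τ` would make the `(τ - λ)⁻¹`
linearly independent, which is impossible for uncountably many `λ`. So `τ` is algebraic over
`ℂ`, hence a constant `λ`, and evaluating at a point of `V(Q)` where `g₀ c_N ≠ 0` gives `λ ∈ ℚ`.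
-/

open MvPolynomial

theorem Transcendental.countable_setOf_inv_sub_mem_span {F E : Type*} [Field F] [Field E]
    [Algebra F E] {x : E} (hx : Transcendental F x) {s : Set E} (hs : s.Countable) :
    {a : F | (x - algebraMap F E a)⁻¹ ∈ Submodule.span F s}.Countable := by
  set T := {a : F | (x - algebraMap F E a)⁻¹ ∈ Submodule.span F s}
  have hli : LinearIndependent F fun a : T =>
      (⟨(x - algebraMap F E a)⁻¹, a.2⟩ : Submodule.span F s) :=
    .of_comp (Submodule.span F s).subtype
      (hx.linearIndependent_sub_inv.comp _ Subtype.val_injective)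
  have hrank : Module.rank F (Submodule.span F s) ≤ Cardinal.aleph0 :=
    (rank_span_le s).trans (Cardinal.mk_le_aleph0_iff.mpr hs.to_subtype)
  rw [← Set.countable_coe_iff, ← Cardinal.mk_le_aleph0_iff, ← Cardinal.lift_le_aleph0]
  exact hli.cardinal_lift_le_rank.trans (Cardinal.lift_le_aleph0.mpr hrank)

theorem IsAlgClosed.mem_range_algebraMap_of_inv_sub_mem_span {k K : Type*} [Field k]
    [IsAlgClosed k] [Uncountable k] [Field K] [Algebra k K] {x : K} {s : Set K}
    (hs : s.Countable) {S : Set k} (hS : S.Countable)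
    (h : ∀ a ∉ S, (x - algebraMap k K a)⁻¹ ∈ Submodule.span k s) :
    x ∈ (algebraMap k K).range := by
  by_contra hx
  have htrans : Transcendental k x := fun halg => hx <| minpoly.mem_range_of_degree_eq_one k x <|
    IsAlgClosed.degree_eq_one_of_irreducible k (minpoly.irreducible halg.isIntegral)
  refine Set.not_countable_univ ((hS.union (htrans.countable_setOf_inv_sub_mem_span hs)).mono ?_)
  intro a _
  by_cases ha : a ∈ S
  exacts [Or.inl ha, Or.inr (h a ha)]

theorem MvPolynomial.algHom_mul_pow_mem_span {R σ A : Type*} [CommSemiring R] [CommSemiring A]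
    [Algebra R A] (φ : MvPolynomial σ R →ₐ[R] A) (x : A) (r : MvPolynomial σ R) (n : ℕ) :
    φ r * x ^ n ∈
      Submodule.span R (Set.range fun p : (σ →₀ ℕ) × ℕ => φ (monomial p.1 1) * x ^ p.2) := by
  have hr : r ∈ Submodule.span R (Set.range fun d => monomial d (1 : R)) := by
    simpa [coe_basisMonomials] using (basisMonomials σ R).mem_span r
  refine Submodule.span_mono ?_
    (Submodule.apply_mem_span_image_of_mem_span
      ((LinearMap.mulRight R (x ^ n)).comp φ.toLinearMap) hr)
  rintro _ ⟨_, ⟨d, rfl⟩, rfl⟩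
  exact ⟨(d, n), rfl⟩

theorem MvPolynomial.exists_mem_zeroLocus_eval_ne_zero {k σ : Type*} [Field k] [IsAlgClosed k]
    [Finite σ] {I : Ideal (MvPolynomial σ k)} {f : MvPolynomial σ k} (hf : f ∉ I.radical) :
    ∃ x ∈ zeroLocus k I, eval x f ≠ 0 := by
  by_contra! h
  exact hf (vanishingIdeal_zeroLocus_eq_radical (K := k) I ▸ (mem_vanishingIdeal_iff.mpr h))

section FunctionField

variable {k σ : Type*} [Field k] {Q : Ideal (MvPolynomial σ k)} [Q.IsPrime]

local notation "θ" => algebraMap (MvPolynomial σ k) Q.ResidueField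

theorem inv_div_sub_algebraMap_mem_span {a b g : MvPolynomial σ k} {lam : k} (hb : b ∉ Q)
    (hg : g ∉ Q) (h : g ∈ (Q ⊔ Ideal.span {a - C lam * b}).radical) :
    (θ a / θ b - algebraMap k Q.ResidueField lam)⁻¹ ∈ Submodule.span k
      (Set.range fun p : (σ →₀ ℕ) × ℕ => θ (monomial p.1 1) * (θ g)⁻¹ ^ p.2) := by
  obtain ⟨n, hn⟩ := Ideal.mem_radical_iff.mp h
  obtain ⟨q, hq, _, hd, hqd⟩ := Submodule.mem_sup.mp hn
  obtain ⟨u, rfl⟩ := Ideal.mem_span_singleton'.mp hd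
  have hθb : θ b ≠ 0 := by simpa using hb
  have hθg : θ g ≠ 0 := by simpa using hg
  have hθq : θ q = 0 := by simpa using hq
  have key : (θ a / θ b - algebraMap k Q.ResidueField lam) * (θ u * θ b) = θ g ^ n := by
    rw [← map_pow, ← hqd, map_add, hθq, zero_add, map_mul, map_sub, map_mul,
      IsScalarTower.algebraMap_apply k (MvPolynomial σ k) Q.ResidueField, algebraMap_eq]
    field_simp
  rw [inv_eq_of_mul_eq_one_right (a := _ - _) (b := θ (u * b) * (θ g)⁻¹ ^ n)]
  · exact algHom_mul_pow_mem_span (IsScalarTower.toAlgHom k _ _) _ _ _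
  · rw [map_mul, inv_pow, ← mul_assoc, key, mul_inv_cancel₀ (pow_ne_zero _ hθg)]

theorem exists_sub_C_mul_mem_of_forall_eval [IsAlgClosed k] [Uncountable k] [Finite σ]
    {a b g : MvPolynomial σ k} (hb : b ∉ Q) (hg : g ∉ Q) {S : Set k} (hS : S.Countable)
    (h : ∀ y ∈ zeroLocus k Q, eval y g ≠ 0 → ∃ z ∈ S, eval y a = z * eval y b) :
    ∃ lam ∈ S, a - C lam * b ∈ Q := by
  have hgb : g * b ∉ Q := fun hgbQ => (Ideal.IsPrime.mem_or_mem ‹_› hgbQ).elim hg hb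
  -- Nullstellensatz: `g * b` vanishes on `V(Q) ∩ {a = lam * b}` as soon as `lam ∉ S`.
  have hinv (lam : k) (hlam : lam ∉ S) := inv_div_sub_algebraMap_mem_span hb hgb <| by
    rw [← vanishingIdeal_zeroLocus_eq_radical (K := k)]
    refine mem_vanishingIdeal_iff.mpr fun y hy => ?_
    have hyQ : y ∈ zeroLocus k Q := fun p hp => hy p (Ideal.mem_sup_left hp)
    have hya : eval y a = lam * eval y b := by
      simpa [sub_eq_zero] using hy _ (Ideal.mem_sup_right (Ideal.mem_span_singleton_self _))
    change eval y (g * b) = 0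
    rw [map_mul, mul_eq_zero, or_iff_not_imp_left]
    intro hyg
    obtain ⟨z, hz, hza⟩ := h y hyQ hyg
    refine (mul_eq_zero.mp ?_).resolve_left (sub_ne_zero.mpr (ne_of_mem_of_not_mem hz hlam).symm)
    rw [sub_mul, ← hya, hza, sub_self]
  obtain ⟨lam, hlam⟩ := IsAlgClosed.mem_range_algebraMap_of_inv_sub_mem_span
    (Set.countable_range _) hS hinv
  have hmem : a - C lam * b ∈ Q := by
    rw [← Ideal.algebraMap_residueField_eq_zero, map_sub, map_mul, ← algebraMap_eq,
      ← IsScalarTower.algebraMap_apply, hlam,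
      div_mul_cancel₀ _ (by simpa using hb), sub_self]
  obtain ⟨y, hyQ, hy⟩ := exists_mem_zeroLocus_eval_ne_zero
    (by rwa [Ideal.IsPrime.radical ‹_›] : g * b ∉ Q.radical)
  obtain ⟨z, hz, hza⟩ := h y hyQ (left_ne_zero_of_mul (by simpa using hy))
  have hyb : eval y b ≠ 0 := right_ne_zero_of_mul (by simpa using hy)
  have hya : eval y a = lam * eval y b := by simpa [sub_eq_zero] using hyQ _ hmem
  exact ⟨lam, mul_right_cancel₀ hyb (hya.symm.trans hza) ▸ hz, hmem⟩

end FunctionField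

theorem rationality_lemma_general
    (m : ℕ)
    (Q : Ideal (MvPolynomial (Fin m) ℂ)) (hQ : Q.IsPrime)
    (N : ℕ) (c : Fin (N + 1) → MvPolynomial (Fin m) ℂ)
    (g0 : MvPolynomial (Fin m) ℂ) (hg0 : g0 ∉ Q)
    (hrat : ∀ y : Fin m → ℂ,
      (∀ g ∈ Q, MvPolynomial.eval y g = 0) →
      MvPolynomial.eval y g0 ≠ 0 →
      MvPolynomial.eval y (c (Fin.last N)) ≠ 0 ∧
      ∀ i : Fin (N + 1), ∃ r : ℚ,
        MvPolynomial.eval y (c i) = (r : ℂ) * MvPolynomial.eval y (c (Fin.last N))) :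
    ∃ qq : Fin (N + 1) → ℚ, qq (Fin.last N) = 1 ∧
      ∀ i : Fin (N + 1), c i - MvPolynomial.C (qq i : ℂ) * c (Fin.last N) ∈ Q := by
  have : Uncountable ℂ := Set.not_countable_univ_iff.mp not_countable_complex
  obtain ⟨y, hyQ, hy⟩ :=
    exists_mem_zeroLocus_eval_ne_zero (by rwa [hQ.radical] : g0 ∉ Q.radical)
  have hcN : c (Fin.last N) ∉ Q := fun h => (hrat y hyQ hy).1 (hyQ _ h)
  have hq (i : Fin (N + 1)) : ∃ q : ℚ, c i - C (q : ℂ) * c (Fin.last N) ∈ Q := by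
    obtain ⟨_, ⟨q, rfl⟩, hmem⟩ := exists_sub_C_mul_mem_of_forall_eval hcN hg0
      (Set.countable_range ((↑) : ℚ → ℂ)) fun y hy hyg => by
        obtain ⟨r, hr⟩ := (hrat y hy hyg).2 i
        exact ⟨r, ⟨r, rfl⟩, hr⟩
    exact ⟨q, hmem⟩
  choose q hq using hq
  refine ⟨fun i => if i = Fin.last N then 1 else q i, by simp, fun i => ?_⟩
  by_cases hi : i = Fin.last N <;> simp [hi, hq]

/-- Rationality lemma: let Q be a prime ideal of ℂ[y_1, …, y_m] and
p = Σ_{i=0}^N c_i s^i with c_N ≠ 0.  If on a nonempty Zariski-open part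
{g₀ ≠ 0} of V(Q) the normalized polynomial Σ_i (c_i(y)/c_N(y)) s^i always lies in
ℚ[s], then there is a monic q ∈ ℚ[s] of degree N with p − c_N·q ∈ Q[s], i.e. all
coefficients c_i − q_i c_N lie in Q. -/
theorem rationality_lemma
    (m : ℕ) (hm : 0 < m)
    (Q : Ideal (MvPolynomial (Fin m) ℂ)) (hQ : Q.IsPrime)
    (N : ℕ) (c : Fin (N + 1) → MvPolynomial (Fin m) ℂ)
    (hcN : c (Fin.last N) ≠ 0)
    (g0 : MvPolynomial (Fin m) ℂ) (hg0 : g0 ∉ Q)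
    (hrat : ∀ y : Fin m → ℂ,
      (∀ g ∈ Q, MvPolynomial.eval y g = 0) →
      MvPolynomial.eval y g0 ≠ 0 →
      MvPolynomial.eval y (c (Fin.last N)) ≠ 0 ∧
      ∀ i : Fin (N + 1), ∃ r : ℚ,
        MvPolynomial.eval y (c i) = (r : ℂ) * MvPolynomial.eval y (c (Fin.last N))) :
    ∃ qq : Fin (N + 1) → ℚ, qq (Fin.last N) = 1 ∧
      ∀ i : Fin (N + 1), c i - MvPolynomial.C (qq i : ℂ) * c (Fin.last N) ∈ Q :=
  rationality_lemma_general m Q hQ N c g0 hg0 hrat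
end
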